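/- arXiv:1904.03356 — 2 statements merged into one kernel-verified Lean document; each statement's English description precedes it below -/
import Mathlib

section
/- With H^{(r+λ)}(y; Φ(r)) = e^{Φ(r)y} for y ≤ 0 and the formula of the previous integral for y ≥ 0, for every z ∈ ℝ the improper integral ∫_{-∞}^{z} H^{(r+λ)}(y; Φ(r)) dy converges and equals (1/Φ(r)) ( Z^{(r+λ)}(z; Φ(r)) - λ (Φ(r+λ)/(Φ(r+λ) - Φ(r))) 𝑊̄^{(r+λ)}(z) ), where for z ≤ 0 the conventions Z^{(r+λ)}(z; Φ(r)) = e^{Φ(r)z} and 𝑊̄^{(r+λ)}(z) = 0 apply. -/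
/-!
The right-hand side `F z` is continuous in `z`, equals `e^{Φ(r) z} / Φ(r)` for `z ≤ 0`, and is an
antiderivative of `H` on `(0, ∞)`: differentiating `Z(·; Φ(r)) / Φ(r)` produces `Z + (λ / Φ(r)) W`,
and `1/Φ(r) - Φ(r+λ)/(Φ(r) (Φ(r+λ) - Φ(r))) = -1/(Φ(r+λ) - Φ(r))` turns the `W`-terms into the
one in `H`. Hence `∫_{-∞}^0 H = 1/Φ(r) = F 0` and `∫_0^z H = F z - F 0`.
-/

open MeasureTheory

/-- The function H^{(r+λ)}(·;Φ(r)), with the conventions W = 0 and the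
integral ∫₀^{y∨0} on the negative half-line. -/
noncomputable def Hfun (W : ℝ → ℝ) (lam pr prl y : ℝ) : ℝ :=
  Real.exp (pr * y) * (1 + lam * ∫ u in (0 : ℝ)..(max y 0), Real.exp (-(pr * u)) * W u)
    - (lam / (prl - pr)) * W y

open Set

section IntegralMaxZero

variable {f : ℝ → ℝ}

lemma integral_max_zero_eq_integral_comp_max (t : ℝ) :
    ∫ u in (0 : ℝ)..max t 0, f u = ∫ u in (0 : ℝ)..max t 0, f (max u 0) :=
  intervalIntegral.integral_congr fun u hu => by
    rw [uIcc_of_le (le_max_right t 0)] at hu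
    rw [max_eq_left hu.1]

lemma continuous_integral_max_zero (hf : ContinuousOn f (Ici 0)) :
    Continuous fun t => ∫ u in (0 : ℝ)..max t 0, f u := by
  have hg : Continuous fun u => f (max u 0) :=
    hf.comp_continuous (continuous_id.max continuous_const) fun u => le_max_right u 0
  simp_rw [integral_max_zero_eq_integral_comp_max (f := f)]
  exact (intervalIntegral.continuous_primitive (fun a b => hg.intervalIntegrable a b) 0).comp
    (continuous_id.max continuous_const)

lemma hasDerivAt_integral_max_zero (hf : ContinuousOn f (Ici 0)) {t : ℝ} (ht : 0 < t) :
    HasDerivAt (fun s => ∫ u in (0 : ℝ)..max s 0, f u) (f t) t := by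
  have hFTC := intervalIntegral.integral_hasDerivAt_right
    ((hf.mono Icc_subset_Ici_self).intervalIntegrable_of_Icc ht.le)
    ((hf.mono Ioi_subset_Ici_self).stronglyMeasurableAtFilter isOpen_Ioi t ht)
    (hf.continuousAt (Ici_mem_nhds ht))
  refine hFTC.congr_of_eventuallyEq ?_
  filter_upwards [lt_mem_nhds ht] with s hs
  rw [max_eq_left hs.le]

end IntegralMaxZero

/-- `(1/Φ(r)) (Z(z; Φ(r)) - λ Φ(r+λ)/(Φ(r+λ) - Φ(r)) W̄(z))`. -/
noncomputable def Hprimitive (W : ℝ → ℝ) (lam pr prl z : ℝ) : ℝ :=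
  (1 / pr) *
    (Real.exp (pr * z) * (1 + lam * ∫ u in (0 : ℝ)..(max z 0), Real.exp (-(pr * u)) * W u)
      - lam * (prl / (prl - pr)) * ∫ u in (0 : ℝ)..(max z 0), W u)

section Hprimitive

variable {W : ℝ → ℝ} {lam pr prl : ℝ}

lemma Hfun_of_neg (hW : ∀ y < (0 : ℝ), W y = 0) {y : ℝ} (hy : y < 0) :
    Hfun W lam pr prl y = Real.exp (pr * y) := by
  simp [Hfun, max_eq_right hy.le, hW y hy]

lemma Hprimitive_of_nonpos {z : ℝ} (hz : z ≤ 0) :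
    Hprimitive W lam pr prl z = Real.exp (pr * z) / pr := by
  simp [Hprimitive, max_eq_right hz, div_eq_inv_mul]

lemma ContinuousOn.exp_neg_mul_mul {s : Set ℝ} (hW : ContinuousOn W s) :
    ContinuousOn (fun u => Real.exp (-(pr * u)) * W u) s :=
  (by fun_prop : Continuous fun u => Real.exp (-(pr * u))).continuousOn.mul hW

lemma continuous_Hprimitive (hW : ContinuousOn W (Ici 0)) :
    Continuous (Hprimitive W lam pr prl) := by
  have hA := continuous_integral_max_zero (hW.exp_neg_mul_mul (pr := pr))
  have hB := continuous_integral_max_zero hW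
  unfold Hprimitive
  fun_prop

lemma continuousOn_Hfun (hW : ContinuousOn W (Ici 0)) :
    ContinuousOn (Hfun W lam pr prl) (Ici 0) := by
  have hA := continuous_integral_max_zero (hW.exp_neg_mul_mul (pr := pr))
  exact (by fun_prop : Continuous fun y => Real.exp (pr * y) *
      (1 + lam * ∫ u in (0 : ℝ)..(max y 0), Real.exp (-(pr * u)) * W u)).continuousOn.sub
    (continuousOn_const.mul hW)

lemma hasDerivAt_Hprimitive_of_neg (hpr : pr ≠ 0) (hW : ∀ y < (0 : ℝ), W y = 0) {y : ℝ}
    (hy : y < 0) : HasDerivAt (Hprimitive W lam pr prl) (Hfun W lam pr prl y) y := by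
  have hexp : HasDerivAt (fun t => Real.exp (pr * t) / pr) (Real.exp (pr * y)) y := by
    simpa [hpr] using (((hasDerivAt_id y).const_mul pr).exp).div_const pr
  rw [Hfun_of_neg hW hy]
  refine hexp.congr_of_eventuallyEq ?_
  filter_upwards [gt_mem_nhds hy] with t ht
  exact Hprimitive_of_nonpos ht.le

lemma hasDerivAt_Hprimitive_of_pos (hpr : pr ≠ 0) (hprl : prl ≠ pr)
    (hW : ContinuousOn W (Ici 0)) {y : ℝ} (hy : 0 < y) :
    HasDerivAt (Hprimitive W lam pr prl) (Hfun W lam pr prl y) y := by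
  have hA := hasDerivAt_integral_max_zero (hW.exp_neg_mul_mul (pr := pr)) hy
  have hB := hasDerivAt_integral_max_zero hW hy
  have hexp : HasDerivAt (fun t => Real.exp (pr * t)) (Real.exp (pr * y) * pr) y := by
    simpa using ((hasDerivAt_id y).const_mul pr).exp
  have h := (((hexp.mul ((hA.const_mul lam).const_add 1)).sub
    (hB.const_mul (lam * (prl / (prl - pr))))).const_mul (1 / pr))
  refine h.congr_deriv ?_
  have hsub : prl - pr ≠ 0 := sub_ne_zero.2 hprl
  simp only [Hfun, max_eq_left hy.le, Real.exp_neg]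
  field_simp
  ring

lemma hasDerivAt_Hprimitive (hpr : pr ≠ 0) (hprl : prl ≠ pr) (hWcont : ContinuousOn W (Ici 0))
    (hWneg : ∀ y < (0 : ℝ), W y = 0) {y : ℝ} (hy : y ≠ 0) :
    HasDerivAt (Hprimitive W lam pr prl) (Hfun W lam pr prl y) y := by
  rcases hy.lt_or_gt with hy | hy
  · exact hasDerivAt_Hprimitive_of_neg hpr hWneg hy
  · exact hasDerivAt_Hprimitive_of_pos hpr hprl hWcont hy

lemma integrableOn_Hfun_Iic (hpr : 0 < pr) (hWcont : ContinuousOn W (Ici 0))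
    (hWneg : ∀ y < (0 : ℝ), W y = 0) (z : ℝ) :
    IntegrableOn (Hfun W lam pr prl) (Iic z) := by
  have hneg : IntegrableOn (Hfun W lam pr prl) (Iic 0) := by
    rw [integrableOn_Iic_iff_integrableOn_Iio]
    exact ((integrableOn_exp_mul_Iic hpr 0).mono_set Iio_subset_Iic_self).congr_fun
      (fun y hy => (Hfun_of_neg hWneg hy).symm) measurableSet_Iio
  have hpos : IntegrableOn (Hfun W lam pr prl) (Icc 0 z) :=
    ((continuousOn_Hfun hWcont).mono Icc_subset_Ici_self).integrableOn_Icc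
  refine (hneg.union hpos).mono_set fun y hy => ?_
  rcases le_or_gt y 0 with hy0 | hy0
  · exact Or.inl hy0
  · exact Or.inr ⟨hy0.le, hy⟩

lemma setIntegral_Hfun_Iic_zero (hWneg : ∀ y < (0 : ℝ), W y = 0) :
    ∫ y in Iic 0, Hfun W lam pr prl y = ∫ y in Iic 0, Real.exp (pr * y) := by
  rw [integral_Iic_eq_integral_Iio, integral_Iic_eq_integral_Iio]
  exact setIntegral_congr_fun measurableSet_Iio fun y hy => Hfun_of_neg hWneg hy

lemma intervalIntegral_Hfun_zero (hpr : 0 < pr) (hprl : prl ≠ pr)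
    (hWcont : ContinuousOn W (Ici 0)) (hWneg : ∀ y < (0 : ℝ), W y = 0) (z : ℝ) :
    ∫ y in (0 : ℝ)..z, Hfun W lam pr prl y
      = Hprimitive W lam pr prl z - Hprimitive W lam pr prl 0 := by
  refine intervalIntegral.integral_eq_sub_of_hasDeriv_right
    (continuous_Hprimitive hWcont).continuousOn (fun y hy => ?_)
    ((integrableOn_Hfun_Iic hpr hWcont hWneg (max 0 z)).mono_set
      Icc_subset_Iic_self).intervalIntegrable
  have hy0 : y ≠ 0 := by
    rintro rfl
    simp only [mem_Ioo, min_lt_iff, lt_max_iff, lt_self_iff_false, false_or] at hy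
    linarith [hy.1, hy.2]
  exact (hasDerivAt_Hprimitive hpr.ne' hprl hWcont hWneg hy0).hasDerivWithinAt

end Hprimitive

theorem stmt6_general (W : ℝ → ℝ) (lam pr prl : ℝ)
    (hpr : 0 < pr) (hlt : pr < prl)
    (hWcont : ContinuousOn W (Set.Ici (0 : ℝ)))
    (hWneg : ∀ y < (0 : ℝ), W y = 0)
    (z : ℝ) :
    IntegrableOn (Hfun W lam pr prl) (Set.Iic z) volume ∧
      (∫ y in Set.Iic z, Hfun W lam pr prl y)
        = (1 / pr) *
            (Real.exp (pr * z)
                * (1 + lam * ∫ u in (0 : ℝ)..(max z 0), Real.exp (-(pr * u)) * W u)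
              - lam * (prl / (prl - pr))
                * ∫ u in (0 : ℝ)..(max z 0), W u) := by
  have hint := integrableOn_Hfun_Iic (lam := lam) (prl := prl) hpr hWcont hWneg
  refine ⟨hint z, ?_⟩
  have hsplit := intervalIntegral.integral_Iic_sub_Iic (hint 0) (hint z)
  rw [intervalIntegral_Hfun_zero hpr hlt.ne' hWcont hWneg, setIntegral_Hfun_Iic_zero hWneg,
    integral_exp_mul_Iic hpr, ← Hprimitive_of_nonpos le_rfl] at hsplit
  change _ = Hprimitive W lam pr prl z
  linarith

/-- For every z ∈ ℝ, the improper integral ∫_{-∞}^z H^{(r+λ)}(y;Φ(r)) dy converges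
and equals (1/Φ(r))( Z^{(r+λ)}(z;Φ(r)) - λ (Φ(r+λ)/(Φ(r+λ)-Φ(r))) 𝑊̄^{(r+λ)}(z) ),
with the conventions Z^{(r+λ)}(z;Φ(r)) = e^{Φ(r)z} and 𝑊̄^{(r+λ)}(z) = 0 for z ≤ 0. -/
theorem stmt6 (W : ℝ → ℝ) (r lam pr prl : ℝ)
    (hr : 0 < r) (hlam : 0 < lam) (hpr : 0 < pr) (hlt : pr < prl)
    (hWcont : ContinuousOn W (Set.Ici (0 : ℝ)))
    (hWneg : ∀ y < (0 : ℝ), W y = 0)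
    (hWmono : MonotoneOn W (Set.Ici (0 : ℝ)))
    (z : ℝ) :
    IntegrableOn (Hfun W lam pr prl) (Set.Iic z) volume ∧
      (∫ y in Set.Iic z, Hfun W lam pr prl y)
        = (1 / pr) *
            (Real.exp (pr * z)
                * (1 + lam * ∫ u in (0 : ℝ)..(max z 0), Real.exp (-(pr * u)) * W u)
              - lam * (prl / (prl - pr))
                * ∫ u in (0 : ℝ)..(max z 0), W u) :=
  stmt6_general W lam pr prl hpr hlt hWcont hWneg z
end

section
/- ∫₀^∞ e^{-Φ(q+λ)y} Z^{(q)}(y; Φ(q+λ)) dy = ψ'(Φ(q+λ))/λ, where Z^{(q)}(y; Φ(q+λ)) = e^{Φ(q+λ)y}(1 - λ∫₀^y e^{-Φ(q+λ)z} W^{(q)}(z) dz). -/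
open MeasureTheory

/-- ∫₀^∞ e^{-Φ(q+λ)y} Z^{(q)}(y;Φ(q+λ)) dy = ψ'(Φ(q+λ))/λ, where
Z^{(q)}(y;Φ(q+λ)) = e^{Φ(q+λ)y}(1 - λ∫₀^y e^{-Φ(q+λ)z} W^{(q)}(z) dz).
Here pq = Φ(q), pl = Φ(q+λ), and dψ = ψ'(Φ(q+λ)). -/
theorem stmt17 (ψ W : ℝ → ℝ) (q lam pq pl dψ : ℝ)
    (hq : 0 ≤ q) (hlam : 0 < lam) (hlt : pq < pl)
    (hψpl : ψ pl = q + lam)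
    (hderiv : HasDerivAt ψ dψ pl) (hdψ : 0 < dψ)
    (hWcont : ContinuousOn W (Set.Ici (0 : ℝ)))
    (hWneg : ∀ y < (0 : ℝ), W y = 0)
    (hLT : ∀ θ > pq,
      IntegrableOn (fun y => Real.exp (-(θ * y)) * W y) (Set.Ioi (0 : ℝ)) volume ∧
        (∫ y in Set.Ioi (0 : ℝ), Real.exp (-(θ * y)) * W y) = 1 / (ψ θ - q)) :
    (∫ y in Set.Ioi (0 : ℝ),
        Real.exp (-(pl * y)) *
          (Real.exp (pl * y) *
            (1 - lam * ∫ z in (0 : ℝ)..y, Real.exp (-(pl * z)) * W z)))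
      = dψ / lam := by
  have hlam0 : lam ≠ 0 := ne_of_gt hlam
  set μ := volume.restrict (Set.Ioi (0 : ℝ)) with hμdef
  have hψq : ψ pl - q = lam := by rw [hψpl]; ring
  set f : ℝ → ℝ := fun z => Real.exp (-(pl * z)) * W z with hfdef
  have hfint : Integrable f μ := (hLT pl hlt).1
  have hfval : ∫ z, f z ∂μ = 1 / lam := by
    have h := (hLT pl hlt).2
    rw [hψq] at h
    exact h
  -- ### Step 1: Derivative of the Laplace transform.
  set ε : ℝ := (pl - pq) / 4 with hεdef
  have hεpos : 0 < ε := by rw [hεdef]; linarith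
  set θ₀ : ℝ := (pl + pq) / 2 with hθ₀def
  have hθ₀ : θ₀ > pq := by rw [hθ₀def]; linarith
  have hboundInt : Integrable (fun y => ε⁻¹ * ‖Real.exp (-(θ₀ * y)) * W y‖) μ :=
    ((hLT θ₀ hθ₀).1.norm).const_mul _
  have hWc : ContinuousOn W (Set.Ioi (0 : ℝ)) := hWcont.mono Set.Ioi_subset_Ici_self
  have key := hasDerivAt_integral_of_dominated_loc_of_deriv_le (μ := μ)
      (F := fun x y => Real.exp (-(x * y)) * W y)
      (F' := fun x y => -y * (Real.exp (-(x * y)) * W y))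
      (x₀ := pl) (bound := fun y => ε⁻¹ * ‖Real.exp (-(θ₀ * y)) * W y‖)
      (Metric.ball_mem_nhds pl hεpos)
      (((isOpen_Ioi (a := pq)).eventually_mem hlt).mono fun x hx =>
        (hLT x hx).1.aestronglyMeasurable)
      (hLT pl hlt).1
      (((continuous_id.neg).continuousOn.mul
        ((((continuous_const.mul continuous_id).neg).rexp).continuousOn.mul hWc)).aestronglyMeasurable
        measurableSet_Ioi)
      ?_ hboundInt ?_
  rotate_left
  · -- bound
    filter_upwards [ae_restrict_mem measurableSet_Ioi] with y hy x hx
    have hy0 : (0 : ℝ) < y := hy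
    have hxlb : pl - ε < x := by
      have := abs_lt.mp (by simpa [Real.dist_eq] using Metric.mem_ball.mp hx)
      linarith [this.1]
    have h1 : y ≤ ε⁻¹ * Real.exp (ε * y) := by
      have h2 : ε * y ≤ Real.exp (ε * y) := by
        have := Real.add_one_le_exp (ε * y)
        linarith
      calc y = ε⁻¹ * (ε * y) := by field_simp
        _ ≤ ε⁻¹ * Real.exp (ε * y) := by
            exact mul_le_mul_of_nonneg_left h2 (by positivity)
    have h3 : Real.exp (-(x * y)) ≤ Real.exp (-((pl - ε) * y)) :=
      Real.exp_le_exp.mpr (by nlinarith)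
    have h4 : y * Real.exp (-(x * y)) ≤ ε⁻¹ * Real.exp (-(θ₀ * y)) := by
      calc y * Real.exp (-(x * y))
          ≤ (ε⁻¹ * Real.exp (ε * y)) * Real.exp (-((pl - ε) * y)) :=
            mul_le_mul h1 h3 (Real.exp_pos _).le (by positivity)
        _ = ε⁻¹ * Real.exp (ε * y + -((pl - ε) * y)) := by
            rw [mul_assoc, Real.exp_add]
        _ = ε⁻¹ * Real.exp (-(θ₀ * y)) := by
            congr 1
            rw [hεdef, hθ₀def]
            ring_nf
    have hnorm : ‖-y * (Real.exp (-(x * y)) * W y)‖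
        = (y * Real.exp (-(x * y))) * ‖W y‖ := by
      rw [norm_mul, norm_neg, norm_mul, Real.norm_eq_abs y,
        abs_of_pos hy0, Real.norm_eq_abs (Real.exp _),
        abs_of_pos (Real.exp_pos _), mul_assoc]
    rw [hnorm]
    have hWnorm : ‖Real.exp (-(θ₀ * y)) * W y‖ = Real.exp (-(θ₀ * y)) * ‖W y‖ := by
      rw [norm_mul, Real.norm_eq_abs (Real.exp _), abs_of_pos (Real.exp_pos _)]
    rw [hWnorm, ← mul_assoc]
    exact mul_le_mul_of_nonneg_right h4 (norm_nonneg _)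
  · -- differentiability
    refine Filter.Eventually.of_forall fun y x _ => ?_
    have h0 : HasDerivAt (fun x : ℝ => -(x * y)) (-y) x := (hasDerivAt_mul_const y).neg
    have h1 := (h0.exp).mul_const (W y)
    exact h1.congr_deriv (by ring)
  obtain ⟨hF'int, hDeriv⟩ := key
  -- identify the derivative
  have hG : HasDerivAt (fun θ => 1 / (ψ θ - q)) (-dψ / lam ^ 2) pl := by
    have h1 : HasDerivAt (fun θ => ψ θ - q) dψ pl := hderiv.sub_const q
    have h2 := h1.inv (by rw [hψq]; exact hlam0)
    simpa [hψq, one_div, Pi.inv_def] using h2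
  have hLG : (fun θ => ∫ y, Real.exp (-(θ * y)) * W y ∂μ) =ᶠ[nhds pl]
      fun θ => 1 / (ψ θ - q) :=
    ((isOpen_Ioi (a := pq)).eventually_mem hlt).mono fun x hx => (hLT x hx).2
  have hL : HasDerivAt (fun θ => ∫ y, Real.exp (-(θ * y)) * W y ∂μ)
      (-dψ / lam ^ 2) pl := hG.congr_of_eventuallyEq hLG
  have hDeq : (∫ y, -y * (Real.exp (-(pl * y)) * W y) ∂μ) = -dψ / lam ^ 2 :=
    hDeriv.unique hL
  have hzf_int : Integrable (fun y => y * f y) μ := by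
    have heq : (fun y => y * f y)
        = fun y => -(-y * (Real.exp (-(pl * y)) * W y)) := by
      funext y; rw [hfdef]; ring
    rw [heq]
    exact hF'int.neg
  have hJ : (∫ y, y * f y ∂μ) = dψ / lam ^ 2 := by
    have h1 : (∫ y, -(y * f y) ∂μ) = -dψ / lam ^ 2 := by
      simpa [hfdef, neg_mul] using hDeq
    rw [integral_neg, neg_div] at h1
    linarith
  -- ### Step 2: simplify the integrand.
  have hsimp : (∫ y in Set.Ioi (0 : ℝ),
        Real.exp (-(pl * y)) *
          (Real.exp (pl * y) *
            (1 - lam * ∫ z in (0 : ℝ)..y, Real.exp (-(pl * z)) * W z)))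
      = ∫ y, (1 - lam * ∫ z in (0 : ℝ)..y, f z) ∂μ := by
    refine integral_congr_ae (Filter.Eventually.of_forall fun y => ?_)
    beta_reduce
    rw [← mul_assoc, ← Real.exp_add, neg_add_cancel, Real.exp_zero, one_mul]
  rw [hsimp]
  -- ### Step 3: rewrite pointwise as a tail integral.
  have hpt : ∀ᵐ y ∂μ, (1 - lam * ∫ z in (0 : ℝ)..y, f z)
      = lam * ∫ z in Set.Ioi y, f z := by
    filter_upwards [ae_restrict_mem measurableSet_Ioi] with y hy
    have hy' : (0 : ℝ) ≤ y := le_of_lt hy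
    rw [intervalIntegral.integral_of_le hy']
    have hfIoi0 : IntegrableOn f (Set.Ioi (0:ℝ)) volume := hfint
    have hIoc : IntegrableOn f (Set.Ioc 0 y) volume :=
      hfIoi0.mono_set Set.Ioc_subset_Ioi_self
    have hIoi : IntegrableOn f (Set.Ioi y) volume :=
      hfIoi0.mono_set (Set.Ioi_subset_Ioi hy')
    have hsplit := setIntegral_union (Set.Ioc_disjoint_Ioi (le_refl y))
      measurableSet_Ioi hIoc hIoi (f := f) (μ := volume)
    rw [Set.Ioc_union_Ioi_eq_Ioi hy'] at hsplit
    have : (∫ z in Set.Ioc 0 y, f z) = 1 / lam - ∫ z in Set.Ioi y, f z := by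
      have := hfval
      rw [hμdef] at this
      rw [hsplit] at this
      linarith
    rw [this]
    field_simp
    ring
  rw [integral_congr_ae hpt, integral_const_mul]
  -- ### Step 4: Fubini.
  set h : ℝ → ℝ → ℝ := fun y z => (Set.Ioi y).indicator f z with hhdef
  have hindic : ∀ᵐ y ∂μ, (∫ z in Set.Ioi y, f z) = ∫ z, h y z ∂μ := by
    filter_upwards [ae_restrict_mem measurableSet_Ioi] with y hy
    rw [hμdef, hhdef]
    rw [setIntegral_indicator measurableSet_Ioi, Set.Ioi_inter_Ioi,
      max_eq_right (le_of_lt hy)]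
  rw [integral_congr_ae hindic]
  have huncurry_eq : Function.uncurry h
      = {p : ℝ × ℝ | p.1 < p.2}.indicator (fun p => f p.2) := by
    ext p
    by_cases hc : p.1 < p.2
    · simp [Function.uncurry, hhdef, Set.indicator, hc, Set.mem_Ioi]
    · simp [Function.uncurry, hhdef, Set.indicator, hc, Set.mem_Ioi]
  have hmeas_unc : AEStronglyMeasurable (Function.uncurry h) (μ.prod μ) := by
    rw [huncurry_eq]
    exact (hfint.aestronglyMeasurable.comp_snd).indicator
      (measurableSet_lt measurable_fst measurable_snd)
  have hint_unc : Integrable (Function.uncurry h) (μ.prod μ) := by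
    refine ⟨hmeas_unc, ?_⟩
    show (∫⁻ p, (‖Function.uncurry h p‖₊ : ENNReal) ∂(μ.prod μ)) < ⊤
    rw [lintegral_prod_symm (fun p => (‖Function.uncurry h p‖₊ : ENNReal)) hmeas_unc.enorm]
    have hinner : ∀ᵐ z ∂μ, (∫⁻ y, (‖Function.uncurry h (y, z)‖₊ : ENNReal) ∂μ)
        = (‖z * f z‖₊ : ENNReal) := by
      filter_upwards [ae_restrict_mem measurableSet_Ioi] with z hz
      have heq : (fun y => (‖Function.uncurry h (y, z)‖₊ : ENNReal))
          = (Set.Iio z).indicator (fun _ => (‖f z‖₊ : ENNReal)) := by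
        ext y
        by_cases hc : y < z
        · simp [Function.uncurry, hhdef, Set.indicator, hc, Set.mem_Ioi, Set.mem_Iio]
        · simp [Function.uncurry, hhdef, Set.indicator, hc, Set.mem_Ioi, Set.mem_Iio]
      rw [heq, lintegral_indicator measurableSet_Iio, setLIntegral_const, hμdef,
        Measure.restrict_apply measurableSet_Iio]
      rw [Set.inter_comm, Set.Ioi_inter_Iio, Real.volume_Ioo]
      have hzn : ((‖z * f z‖₊ : NNReal) : ENNReal)
          = ENNReal.ofReal z * ((‖f z‖₊ : NNReal) : ENNReal) := by
        rw [nnnorm_mul, ENNReal.coe_mul, (by have := Real.enorm_eq_ofReal (le_of_lt hz); exact this : ((‖z‖₊ : NNReal) : ENNReal) = ENNReal.ofReal z)]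
      rw [hzn, show z - 0 = z from by ring, mul_comm]
    rw [lintegral_congr_ae hinner]
    exact hzf_int.hasFiniteIntegral
  rw [integral_integral_swap hint_unc]
  have hfinal : ∀ᵐ z ∂μ, (∫ y, h y z ∂μ) = z * f z := by
    filter_upwards [ae_restrict_mem measurableSet_Ioi] with z hz
    have heq : (fun y => h y z) = (Set.Iio z).indicator (fun _ => f z) := by
      ext y
      by_cases hc : y < z
      · simp [hhdef, Set.indicator, hc, Set.mem_Ioi, Set.mem_Iio]
      · simp [hhdef, Set.indicator, hc, Set.mem_Ioi, Set.mem_Iio]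
    rw [heq, hμdef, setIntegral_indicator measurableSet_Iio, setIntegral_const,
      Set.Ioi_inter_Iio, Measure.real_def, Real.volume_Ioo, ENNReal.toReal_ofReal (by have := Set.mem_Ioi.mp hz; linarith : (0:ℝ) ≤ z - 0),
      smul_eq_mul]
    ring
  rw [integral_congr_ae hfinal, hJ]
  field_simp
end
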